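/- arXiv:2603.20434 — 2 statements merged into one kernel-verified Lean document; each statement's English description precedes it below -/
import Mathlib

section
/- Let a > 0 and b > 0. For all ε_R > 0 and ε_v > 0 with ε_R + ε_v < 1, one has (1/(1 − ε_R − ε_v))·(a/ε_R + b/ε_v) ≥ 4·(√a + √b)². Moreover, equality holds for ε_R = √a/(2(√a + √b)) and ε_v = √b/(2(√a + √b)), so that the infimum of the left-hand side over the constraint set equals 4·(√a + √b)². -/
open Filter Matrix

/-- Euclidean space `ℝ^n`. -/
abbrev E (n : ℕ) := EuclideanSpace ℝ (Fin n)

/-- Smallest eigenvalue of a (Hermitian) real matrix. -/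
noncomputable def lamMin {n : ℕ} (M : Matrix (Fin n) (Fin n) ℝ) : ℝ :=
  if h : M.IsHermitian then ⨅ i, h.eigenvalues i else 0

/-- Largest eigenvalue of a (Hermitian) real matrix. -/
noncomputable def lamMax {n : ℕ} (M : Matrix (Fin n) (Fin n) ℝ) : ℝ :=
  if h : M.IsHermitian then ⨆ i, h.eigenvalues i else 0

open scoped Classical in
/-- The positive semidefinite square root `M^{1/2}` of a positive semidefinite matrix. -/
noncomputable def matSqrt {n : ℕ} (M : Matrix (Fin n) (Fin n) ℝ) : Matrix (Fin n) (Fin n) ℝ :=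
  if h : M.PosSemidef then (h.1.eigenvectorUnitary : Matrix (Fin n) (Fin n) ℝ) *
      diagonal ((↑) ∘ Real.sqrt ∘ h.1.eigenvalues) * (star h.1.eigenvectorUnitary : Matrix (Fin n) (Fin n) ℝ)
    else 0

/-- `M^{-1/2} := (M^{1/2})⁻¹`. -/
noncomputable def invSqrt {n : ℕ} (M : Matrix (Fin n) (Fin n) ℝ) : Matrix (Fin n) (Fin n) ℝ :=
  (matSqrt M)⁻¹

/-- Operator norm of a matrix induced by the Euclidean norms. -/
noncomputable def opNorm {m n : ℕ} (M : Matrix (Fin m) (Fin n) ℝ) : ℝ :=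
  ‖LinearMap.toContinuousLinearMap (Matrix.toEuclideanLin M)‖

/-- Matrix-vector multiplication as a map between Euclidean spaces. -/
def mv {m n : ℕ} (M : Matrix (Fin m) (Fin n) ℝ) (v : E n) : E m := WithLp.toLp 2 (M.mulVec v)

/-! With `s = εR + εv`, Cauchy–Schwarz in Engel form gives `a / εR + b / εv ≥ (√a + √b)² / s`,
and `s (1 - s) ≤ 1/4`; both are equalities at `εR : εv = √a : √b`, `s = 1/2`. -/

theorem add_sq_div_add_le {p q x y : ℝ} (hx : 0 < x) (hy : 0 < y) :
    (p + q) ^ 2 / (x + y) ≤ p ^ 2 / x + q ^ 2 / y := by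
  rw [div_add_div _ _ hx.ne' hy.ne', div_le_div_iff₀ (by positivity) (by positivity)]
  nlinarith [sq_nonneg (p * y - q * x), mul_pos hx hy]

theorem four_le_one_div_mul_one_sub {s : ℝ} (h0 : 0 < s) (h1 : s < 1) :
    4 ≤ 1 / (s * (1 - s)) := by
  rw [le_div_iff₀ (by nlinarith)]
  nlinarith [sq_nonneg (2 * s - 1)]

theorem four_mul_sqrt_add_sqrt_sq_le {a b εR εv : ℝ} (ha : 0 ≤ a) (hb : 0 ≤ b)
    (hR : 0 < εR) (hv : 0 < εv) (hsum : εR + εv < 1) :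
    4 * (√a + √b) ^ 2 ≤ 1 / (1 - εR - εv) * (a / εR + b / εv) := by
  have hs : 0 < 1 - (εR + εv) := by linarith
  have hcs : (√a + √b) ^ 2 / (εR + εv) ≤ a / εR + b / εv := by
    simpa only [Real.sq_sqrt ha, Real.sq_sqrt hb] using add_sq_div_add_le (p := √a) (q := √b) hR hv
  calc 4 * (√a + √b) ^ 2
      ≤ 1 / ((εR + εv) * (1 - (εR + εv))) * (√a + √b) ^ 2 := by
        gcongr; exact four_le_one_div_mul_one_sub (by positivity) hsum
    _ = 1 / (1 - (εR + εv)) * ((√a + √b) ^ 2 / (εR + εv)) := by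
        field_simp
    _ ≤ 1 / (1 - εR - εv) * (a / εR + b / εv) := by
        rw [sub_sub]
        exact mul_le_mul_of_nonneg_left hcs (one_div_pos.2 hs).le

theorem div_sqrt_div {a : ℝ} (t : ℝ) : a / (√a / t) = √a * t := by
  rw [div_div_eq_mul_div, mul_div_right_comm, Real.div_sqrt]

theorem sqrt_div_add_sqrt_div_eq_half {a b : ℝ} (hab : 0 < √a + √b) :
    √a / (2 * (√a + √b)) + √b / (2 * (√a + √b)) = 1 / 2 := by
  field_simp

theorem value_at_sqrt_div_two_mul_add {a b : ℝ} (hab : 0 < √a + √b) :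
    1 / (1 - √a / (2 * (√a + √b)) - √b / (2 * (√a + √b))) *
        (a / (√a / (2 * (√a + √b))) + b / (√b / (2 * (√a + √b)))) =
      4 * (√a + √b) ^ 2 := by
  rw [sub_sub, sqrt_div_add_sqrt_div_eq_half hab, div_sqrt_div, div_sqrt_div]
  ring

theorem stmt10 (a b : ℝ) (ha : 0 < a) (hb : 0 < b) :
    (∀ εR εv : ℝ, 0 < εR → 0 < εv → εR + εv < 1 →
        4 * (Real.sqrt a + Real.sqrt b) ^ 2 ≤ (1 / (1 - εR - εv)) * (a / εR + b / εv)) ∧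
    (1 / (1 - Real.sqrt a / (2 * (Real.sqrt a + Real.sqrt b)) -
            Real.sqrt b / (2 * (Real.sqrt a + Real.sqrt b)))) *
        (a / (Real.sqrt a / (2 * (Real.sqrt a + Real.sqrt b))) +
          b / (Real.sqrt b / (2 * (Real.sqrt a + Real.sqrt b)))) =
      4 * (Real.sqrt a + Real.sqrt b) ^ 2 ∧
    sInf {y : ℝ | ∃ εR εv : ℝ, 0 < εR ∧ 0 < εv ∧ εR + εv < 1 ∧
        y = (1 / (1 - εR - εv)) * (a / εR + b / εv)} =
      4 * (Real.sqrt a + Real.sqrt b) ^ 2 := by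
  have hsa : 0 < √a := Real.sqrt_pos.2 ha
  have hsb : 0 < √b := Real.sqrt_pos.2 hb
  have hab : 0 < √a + √b := add_pos hsa hsb
  have lower_bound := fun εR εv ↦ four_mul_sqrt_add_sqrt_sq_le (εR := εR) (εv := εv) ha.le hb.le
  have optimum := value_at_sqrt_div_two_mul_add hab
  refine ⟨lower_bound, optimum, IsLeast.csInf_eq ⟨?_, ?_⟩⟩
  · refine ⟨_, _, by positivity, by positivity, ?_, optimum.symm⟩
    rw [sqrt_div_add_sqrt_div_eq_half hab]
    norm_num
  · rintro y ⟨εR, εv, hR, hv, hsum, rfl⟩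
    exact lower_bound εR εv hR hv hsum
end

section
/- Let X ⊂ ℝ^{n_x} be a nonempty compact set, let x : [0,∞) → ℝ^{n_x} be differentiable with x'(t) = f(x(t)) and x(t) ∈ X for all t ≥ 0, let v : [0,∞) → ℝ^{n_y} satisfy ‖v(t)‖ ≤ v̄ for all t ≥ 0, and let ẑ : [0,∞) → ℝ^{n_z} be differentiable with ẑ'(t) = A ẑ(t) + B(h(x(t)) + v(t)) for all t ≥ 0. Let T̂ : ℝ^{n_x} → ℝ^{n_z} be continuously differentiable with PDE residual R, set R̄ := sup_{x∈X} ‖R(x)‖ and e_z(t) := ẑ(t) − T̂(x(t)). Let P, Q ∈ ℝ^{n_z×n_z} be symmetric positive definite with P A + Aᵀ P = −Q. Then for all ε_R > 0 and ε_v > 0 with ε_R + ε_v < 1, setting c := (1 − ε_R − ε_v)·λ_min(Q)/λ_max(P), one has limsup_{t→∞} ‖e_z(t)‖ ≤ √(1/(c·λ_min(P))) · √( (‖Q^{−1/2}P‖²/ε_R)·R̄² + (‖Q^{−1/2}P B‖²/ε_v)·v̄² ). -/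
open Filter Matrix

/-!
The error `e = ẑ - T̂ ∘ x` obeys `e' = A e + B v - R ∘ x`. Take `V = ⟪e, P e⟫` as Lyapunov
function. By the Lyapunov equation the `A`-part of `V'` is `-⟪e, Q e⟫`; writing
`⟪P e, w⟫ = ⟪Q^{1/2} e, Q^{-1/2} P w⟫` and applying Young's inequality with weights `εR`, `εv`
absorbs the residual and noise terms into `(εR + εv) ⟪e, Q e⟫` plus the constant
`D = ‖Q^{-1/2} P‖² R̄² / εR + ‖Q^{-1/2} P B‖² v̄² / εv`. The Rayleigh bounds
`λ_min(Q)‖e‖² ≤ ⟪e, Q e⟫` and `⟪e, P e⟫ ≤ λ_max(P)‖e‖²` turn this into `V' ≤ -c V + D`, so by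
Grönwall `V` is ultimately at most `D / c`, and `λ_min(P) ‖e‖² ≤ V` gives the bound.
-/

open scoped RealInnerProductSpace

section MatrixVector

variable {m n k : ℕ}

lemma norm_mv_le (M : Matrix (Fin m) (Fin n) ℝ) (y : E n) : ‖mv M y‖ ≤ opNorm M * ‖y‖ :=
  (LinearMap.toContinuousLinearMap (Matrix.toEuclideanLin M)).le_opNorm y

lemma opNorm_nonneg (M : Matrix (Fin m) (Fin n) ℝ) : 0 ≤ opNorm M := norm_nonneg _

lemma continuous_mv (M : Matrix (Fin m) (Fin n) ℝ) : Continuous (mv M) :=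
  (LinearMap.toContinuousLinearMap (Matrix.toEuclideanLin M)).continuous

lemma hasDerivAt_mv (M : Matrix (Fin m) (Fin n) ℝ) {y : ℝ → E n} {y' : E n} {t : ℝ}
    (hy : HasDerivAt y y' t) : HasDerivAt (fun s => mv M (y s)) (mv M y') t :=
  (LinearMap.toContinuousLinearMap (Matrix.toEuclideanLin M)).hasFDerivAt.comp_hasDerivAt t hy

lemma mv_add (M : Matrix (Fin m) (Fin n) ℝ) (a b : E n) : mv M (a + b) = mv M a + mv M b :=
  map_add (LinearMap.toContinuousLinearMap (Matrix.toEuclideanLin M)) a b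

lemma mv_sub (M : Matrix (Fin m) (Fin n) ℝ) (a b : E n) : mv M (a - b) = mv M a - mv M b :=
  map_sub (LinearMap.toContinuousLinearMap (Matrix.toEuclideanLin M)) a b

lemma mv_mv (M : Matrix (Fin m) (Fin n) ℝ) (N : Matrix (Fin n) (Fin k) ℝ) (a : E k) :
    mv M (mv N a) = mv (M * N) a :=
  congrArg (WithLp.toLp 2) (Matrix.mulVec_mulVec a.ofLp M N)

lemma add_mv (M N : Matrix (Fin m) (Fin n) ℝ) (a : E n) : mv (M + N) a = mv M a + mv N a :=
  congrArg (WithLp.toLp 2) (Matrix.add_mulVec _ _ _)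

lemma neg_mv (M : Matrix (Fin m) (Fin n) ℝ) (a : E n) : mv (-M) a = -mv M a :=
  congrArg (WithLp.toLp 2) (Matrix.neg_mulVec _ _)

lemma inner_mv_left (M : Matrix (Fin m) (Fin n) ℝ) (a : E n) (b : E m) :
    ⟪mv M a, b⟫ = ⟪a, mv Mᵀ b⟫ := by
  simp only [EuclideanSpace.inner_eq_star_dotProduct, star_trivial]
  exact (dotProduct_mulVec _ _ _).trans (congrArg (dotProduct · a.ofLp) (mulVec_transpose _ _).symm)

lemma inner_mv_left_of_isHermitian {M : Matrix (Fin n) (Fin n) ℝ} (hM : M.IsHermitian)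
    (a b : E n) : ⟪mv M a, b⟫ = ⟪a, mv M b⟫ := by
  rw [inner_mv_left, (isHermitian_iff_isSymm.mp hM).eq]

end MatrixVector

section Rayleigh

variable {n : ℕ} {M : Matrix (Fin n) (Fin n) ℝ}

lemma Matrix.IsHermitian.inner_mv_self_eq_sum (hM : M.IsHermitian) (y : E n) :
    ⟪y, mv M y⟫ = ∑ i, hM.eigenvalues i * ⟪hM.eigenvectorBasis i, y⟫ ^ 2 := by
  rw [← hM.eigenvectorBasis.sum_inner_mul_inner y (mv M y)]
  refine Finset.sum_congr rfl fun i _ => ?_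
  have hEigen : mv M (hM.eigenvectorBasis i) = hM.eigenvalues i • hM.eigenvectorBasis i := by
    rw [mv, hM.mulVec_eigenvectorBasis i, WithLp.toLp_smul, WithLp.toLp_ofLp]
  rw [← inner_mv_left_of_isHermitian hM, hEigen, real_inner_smul_left, real_inner_comm y]
  ring

lemma lamMin_mul_norm_sq_le (hM : M.IsHermitian) (y : E n) :
    lamMin M * ‖y‖ ^ 2 ≤ ⟪y, mv M y⟫ := by
  rw [hM.inner_mv_self_eq_sum, ← hM.eigenvectorBasis.sum_sq_inner_right, Finset.mul_sum]
  refine Finset.sum_le_sum fun i _ => mul_le_mul_of_nonneg_right ?_ (sq_nonneg _)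
  rw [lamMin, dif_pos hM]
  exact ciInf_le (Set.finite_range _).bddBelow i

lemma inner_mv_self_le_lamMax_mul (hM : M.IsHermitian) (y : E n) :
    ⟪y, mv M y⟫ ≤ lamMax M * ‖y‖ ^ 2 := by
  rw [hM.inner_mv_self_eq_sum, ← hM.eigenvectorBasis.sum_sq_inner_right, Finset.mul_sum]
  refine Finset.sum_le_sum fun i _ => mul_le_mul_of_nonneg_right ?_ (sq_nonneg _)
  rw [lamMax, dif_pos hM]
  exact le_ciSup (Set.finite_range _).bddAbove i

variable [Nonempty (Fin n)]

lemma lamMin_pos (hM : M.PosDef) : 0 < lamMin M := by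
  rw [lamMin, dif_pos hM.isHermitian]
  obtain ⟨i, hi⟩ := exists_eq_ciInf_of_finite (f := hM.isHermitian.eigenvalues)
  exact hi ▸ hM.eigenvalues_pos i

lemma lamMax_pos (hM : M.PosDef) : 0 < lamMax M := by
  rw [lamMax, dif_pos hM.isHermitian]
  obtain ⟨i⟩ := ‹Nonempty (Fin n)›
  exact (hM.eigenvalues_pos i).trans_le (le_ciSup (Set.finite_range _).bddAbove i)

end Rayleigh

section SquareRoot

variable {n : ℕ} {Q : Matrix (Fin n) (Fin n) ℝ}

lemma matSqrt_eq_cfc (hQ : Q.PosSemidef) : matSqrt Q = cfc Real.sqrt Q := by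
  rw [matSqrt, dif_pos hQ, hQ.1.cfc_eq]
  rfl

lemma matSqrt_mul_self (hQ : Q.PosSemidef) : matSqrt Q * matSqrt Q = Q := by
  rw [matSqrt_eq_cfc hQ, ← cfc_mul Real.sqrt Real.sqrt Q]
  conv_rhs => rw [← cfc_id' ℝ Q hQ.1]
  exact cfc_congr fun x hx =>
    Real.mul_self_sqrt ((posSemidef_iff_isHermitian_and_spectrum_nonneg.mp hQ).2 hx)

lemma isHermitian_matSqrt (hQ : Q.PosSemidef) : (matSqrt Q).IsHermitian := by
  rw [matSqrt_eq_cfc hQ]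
  exact cfc_predicate _ _

lemma matSqrt_mul_invSqrt (hQ : Q.PosDef) : matSqrt Q * invSqrt Q = 1 := by
  refine Matrix.mul_nonsing_inv _ (Ne.isUnit fun h0 => hQ.det_pos.ne' ?_)
  rw [← matSqrt_mul_self hQ.posSemidef, det_mul, h0, zero_mul]

lemma norm_mv_matSqrt_sq (hQ : Q.PosSemidef) (u : E n) :
    ‖mv (matSqrt Q) u‖ ^ 2 = ⟪u, mv Q u⟫ := by
  rw [← real_inner_self_eq_norm_sq, inner_mv_left_of_isHermitian (isHermitian_matSqrt hQ),
    mv_mv, matSqrt_mul_self hQ]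

lemma two_mul_inner_mv_le {P : Matrix (Fin n) (Fin n) ℝ} (hQ : Q.PosDef) (hP : P.IsHermitian)
    {ε : ℝ} (hε : 0 < ε) (u w : E n) :
    2 * ⟪mv P u, w⟫ ≤ ε * ⟪u, mv Q u⟫ + ‖mv (invSqrt Q * P) w‖ ^ 2 / ε := by
  have hSplit : ⟪mv P u, w⟫ = ⟪mv (matSqrt Q) u, mv (invSqrt Q * P) w⟫ := by
    rw [inner_mv_left_of_isHermitian (isHermitian_matSqrt hQ.posSemidef), mv_mv,
      ← Matrix.mul_assoc, matSqrt_mul_invSqrt hQ, Matrix.one_mul,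
      inner_mv_left_of_isHermitian hP]
  rw [hSplit, ← norm_mv_matSqrt_sq hQ.posSemidef, ← sub_le_iff_le_add', le_div_iff₀ hε]
  set a := ‖mv (matSqrt Q) u‖
  have hCS := real_inner_le_norm (mv (matSqrt Q) u) (mv (invSqrt Q * P) w)
  nlinarith [sq_nonneg (ε * a - ‖mv (invSqrt Q * P) w‖), norm_nonneg (mv (matSqrt Q) u)]

end SquareRoot

section Lyapunov

variable {n p : ℕ} {P Q A : Matrix (Fin n) (Fin n) ℝ}

lemma HasDerivAt.inner_mv_self (hP : P.IsHermitian) {y : ℝ → E n} {y' : E n} {t : ℝ}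
    (hy : HasDerivAt y y' t) :
    HasDerivAt (fun s => ⟪y s, mv P (y s)⟫) (2 * ⟪mv P (y t), y'⟫) t := by
  refine (hy.inner ℝ (hasDerivAt_mv P hy)).congr_deriv ?_
  rw [← inner_mv_left_of_isHermitian hP, real_inner_comm y']
  ring

lemma two_mul_inner_mv_mv_eq_of_lyapunov (hP : P.IsHermitian) (hLyap : P * A + Aᵀ * P = -Q)
    (e : E n) : 2 * ⟪mv P e, mv A e⟫ = -⟪e, mv Q e⟫ := by
  have hPA : ⟪mv P e, mv A e⟫ = ⟪e, mv (P * A) e⟫ := by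
    rw [inner_mv_left_of_isHermitian hP, mv_mv]
  have hAP : ⟪mv P e, mv A e⟫ = ⟪e, mv (Aᵀ * P) e⟫ := by
    rw [real_inner_comm, inner_mv_left, mv_mv]
  calc 2 * ⟪mv P e, mv A e⟫ = ⟪e, mv (P * A) e⟫ + ⟪e, mv (Aᵀ * P) e⟫ := by
        rw [← hPA, ← hAP, two_mul]
    _ = -⟪e, mv Q e⟫ := by rw [← inner_add_right, ← add_mv, hLyap, neg_mv, inner_neg_right]

lemma mul_lamMin_div_lamMax_mul_le [Nonempty (Fin n)] (hP : P.PosDef) (hQ : Q.PosDef)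
    {κ : ℝ} (hκ : 0 ≤ κ) (e : E n) :
    κ * lamMin Q / lamMax P * ⟪e, mv P e⟫ ≤ κ * ⟪e, mv Q e⟫ := by
  have hP' := lamMax_pos hP
  have hQ' := lamMin_pos hQ
  calc κ * lamMin Q / lamMax P * ⟪e, mv P e⟫
      ≤ κ * lamMin Q / lamMax P * (lamMax P * ‖e‖ ^ 2) := by
        gcongr
        exact inner_mv_self_le_lamMax_mul hP.1 e
    _ = κ * (lamMin Q * ‖e‖ ^ 2) := by field_simp
    _ ≤ κ * ⟪e, mv Q e⟫ := by gcongr; exact lamMin_mul_norm_sq_le hQ.1 e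

lemma sq_norm_mv_div_le {m : ℕ} (M : Matrix (Fin n) (Fin m) ℝ) {y : E m} {b ε : ℝ} (hy : ‖y‖ ≤ b)
    (hε : 0 < ε) : ‖mv M y‖ ^ 2 / ε ≤ opNorm M ^ 2 / ε * b ^ 2 := by
  rw [div_mul_eq_mul_div, ← mul_pow]
  gcongr
  exact (norm_mv_le M y).trans (by gcongr; exact opNorm_nonneg M)

lemma two_mul_inner_mv_le_of_lyapunov [Nonempty (Fin n)] {B : Matrix (Fin n) (Fin p) ℝ}
    (hP : P.PosDef) (hQ : Q.PosDef) (hLyap : P * A + Aᵀ * P = -Q)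
    {εR εv Rbar vbar : ℝ} (hεR : 0 < εR) (hεv : 0 < εv) (hsum : εR + εv < 1)
    (e : E n) {w : E p} {r : E n} (hw : ‖w‖ ≤ vbar) (hr : ‖r‖ ≤ Rbar) :
    2 * ⟪mv P e, mv A e + mv B w - r⟫ ≤
      -((1 - εR - εv) * lamMin Q / lamMax P) * ⟪e, mv P e⟫ +
        (opNorm (invSqrt Q * P) ^ 2 / εR * Rbar ^ 2 +
          opNorm (invSqrt Q * P * B) ^ 2 / εv * vbar ^ 2) := by
  have hA := two_mul_inner_mv_mv_eq_of_lyapunov hP.1 hLyap e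
  have hB := two_mul_inner_mv_le hQ hP.1 hεv e (mv B w)
  have hR := two_mul_inner_mv_le hQ hP.1 hεR e (-r)
  rw [mv_mv] at hB
  have hBbound := sq_norm_mv_div_le (invSqrt Q * P * B) hw hεv
  have hRbound := sq_norm_mv_div_le (invSqrt Q * P) ((norm_neg r).trans_le hr) hεR
  have hDecay := mul_lamMin_div_lamMax_mul_le hP hQ (by linarith : 0 ≤ 1 - εR - εv) e
  rw [sub_eq_add_neg, inner_add_right, inner_add_right]
  linarith

end Lyapunov

lemma tendsto_gronwallBound_atTop {δ c D : ℝ} (hc : 0 < c) :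
    Tendsto (gronwallBound δ (-c) D) atTop (nhds (D / c)) := by
  have hExp : Tendsto (fun t => Real.exp (-c * t)) atTop (nhds 0) := by
    simpa only [neg_mul, Function.comp_def, id] using Real.tendsto_exp_neg_atTop_nhds_zero.comp
      (tendsto_id.const_mul_atTop hc)
  rw [gronwallBound_of_K_ne_0 (neg_ne_zero.mpr hc.ne')]
  convert (hExp.const_mul δ).add ((hExp.sub_const 1).const_mul (D / -c)) using 2
  ring

lemma le_gronwallBound_of_hasDerivAt {V V' : ℝ → ℝ} {K D : ℝ}
    (hV : ∀ t ≥ 0, HasDerivAt V (V' t) t) (hV' : ∀ t ≥ 0, V' t ≤ K * V t + D) {t : ℝ}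
    (ht : 0 ≤ t) : V t ≤ gronwallBound (V 0) K D t := by
  simpa using le_gronwallBound_of_liminf_deriv_right_le
    (fun s hs => (hV s hs.1).continuousAt.continuousWithinAt)
    (fun s hs _ hr => (hV s hs.1).hasDerivWithinAt.liminf_right_slope_le hr)
    le_rfl (fun s hs => hV' s hs.1) t ⟨ht, le_rfl⟩

theorem limsup_norm_le_of_lyapunov {F : Type*} [NormedAddCommGroup F] {e : ℝ → F}
    {V V' : ℝ → ℝ} {l c D : ℝ} (hl : 0 < l) (hc : 0 < c) (hVe : ∀ t, l * ‖e t‖ ^ 2 ≤ V t)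
    (hV : ∀ t ≥ 0, HasDerivAt V (V' t) t) (hV' : ∀ t ≥ 0, V' t ≤ -c * V t + D) :
    limsup (fun t => ‖e t‖) atTop ≤ Real.sqrt (1 / (c * l)) * Real.sqrt D := by
  set g := fun t => Real.sqrt (gronwallBound (V 0) (-c) D t / l)
  have hg : Tendsto g atTop (nhds (Real.sqrt (1 / (c * l)) * Real.sqrt D)) := by
    rw [← Real.sqrt_mul (by positivity), one_div_mul_eq_div, ← div_div]
    exact ((tendsto_gronwallBound_atTop hc).div_const l).sqrt
  have hBound : ∀ᶠ t in atTop, ‖e t‖ ≤ g t := by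
    filter_upwards [eventually_ge_atTop 0] with t ht
    rw [← Real.sqrt_sq (norm_nonneg (e t))]
    refine Real.sqrt_le_sqrt ((le_div_iff₀ hl).mpr ?_)
    linarith [hVe t, le_gronwallBound_of_hasDerivAt hV hV' ht]
  calc limsup (fun t => ‖e t‖) atTop ≤ limsup g atTop :=
        limsup_le_limsup hBound (isCoboundedUnder_le_of_le atTop fun t => norm_nonneg _)
          hg.isBoundedUnder_le
    _ = _ := hg.limsup_eq

theorem stmt11_general {nx ny nz : ℕ}
    (f : E nx → E nx) (hf : Continuous f)
    (h : E nx → E ny) (hh : Continuous h)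
    (A : Matrix (Fin nz) (Fin nz) ℝ) (B : Matrix (Fin nz) (Fin ny) ℝ)
    (X : Set (E nx)) (hXc : IsCompact X)
    (x : ℝ → E nx) (hx : ∀ t ≥ (0:ℝ), HasDerivAt x (f (x t)) t)
    (hxX : ∀ t ≥ (0:ℝ), x t ∈ X)
    (vbar : ℝ)
    (v : ℝ → E ny) (hv : ∀ t ≥ (0:ℝ), ‖v t‖ ≤ vbar)
    (zh : ℝ → E nz)
    (hz : ∀ t ≥ (0:ℝ), HasDerivAt zh (mv A (zh t) + mv B (h (x t) + v t)) t)
    (T : E nx → E nz) (hT : ContDiff ℝ 1 T)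
    (R : E nx → E nz)
    (hR : ∀ p, R p = fderiv ℝ T p (f p) - mv A (T p) - mv B (h p))
    (Rbar : ℝ) (hRbar : Rbar = sSup ((fun p => ‖R p‖) '' X))
    (P Q : Matrix (Fin nz) (Fin nz) ℝ) (hP : P.PosDef) (hQ : Q.PosDef)
    (hLyap : P * A + Aᵀ * P = -Q)
    (εR εv : ℝ) (hεR : 0 < εR) (hεv : 0 < εv) (hsum : εR + εv < 1) :
    limsup (fun t => ‖zh t - T (x t)‖) atTop ≤
      Real.sqrt (1 / (((1 - εR - εv) * lamMin Q / lamMax P) * lamMin P)) *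
        Real.sqrt ((opNorm (invSqrt Q * P)) ^ 2 / εR * Rbar ^ 2 +
          (opNorm (invSqrt Q * P * B)) ^ 2 / εv * vbar ^ 2) := by
  rcases isEmpty_or_nonempty (Fin nz) with hnz | hnz
  · simp only [Subsingleton.elim (zh _ - T (x _)) 0, norm_zero, limsup_const]
    positivity
  have hRcont : Continuous R := by
    rw [funext hR]
    exact (((hT.continuous_fderiv one_ne_zero).clm_apply hf).sub
      ((continuous_mv A).comp hT.continuous)).sub ((continuous_mv B).comp hh)
  have hRle : ∀ p ∈ X, ‖R p‖ ≤ Rbar := fun p hp =>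
    hRbar ▸ le_csSup (hXc.image (continuous_norm.comp hRcont)).bddAbove ⟨p, hp, rfl⟩
  have hError : ∀ t ≥ (0:ℝ), HasDerivAt (fun s => zh s - T (x s))
      (mv A (zh t - T (x t)) + mv B (v t) - R (x t)) t := by
    intro t ht
    refine ((hz t ht).sub ((hT.differentiable one_ne_zero (x t)).hasFDerivAt.comp_hasDerivAt t
      (hx t ht))).congr_deriv ?_
    rw [hR, mv_sub, mv_add]
    abel
  have hc : 0 < (1 - εR - εv) * lamMin Q / lamMax P :=
    div_pos (mul_pos (by linarith) (lamMin_pos hQ)) (lamMax_pos hP)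
  exact limsup_norm_le_of_lyapunov (lamMin_pos hP) hc
    (fun t => lamMin_mul_norm_sq_le hP.1 _) (fun t ht => (hError t ht).inner_mv_self hP.1)
    fun t ht => two_mul_inner_mv_le_of_lyapunov hP hQ hLyap hεR hεv hsum _ (hv t ht)
      (hRle _ (hxX t ht))

theorem stmt11 {nx ny nz : ℕ}
    (f : E nx → E nx) (hf : Continuous f)
    (h : E nx → E ny) (hh : Continuous h)
    (A : Matrix (Fin nz) (Fin nz) ℝ) (B : Matrix (Fin nz) (Fin ny) ℝ)
    (X : Set (E nx)) (hXne : X.Nonempty) (hXc : IsCompact X)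
    (x : ℝ → E nx) (hx : ∀ t ≥ (0:ℝ), HasDerivAt x (f (x t)) t)
    (hxX : ∀ t ≥ (0:ℝ), x t ∈ X)
    (vbar : ℝ) (hvbar : 0 ≤ vbar)
    (v : ℝ → E ny) (hv : ∀ t ≥ (0:ℝ), ‖v t‖ ≤ vbar)
    (zh : ℝ → E nz)
    (hz : ∀ t ≥ (0:ℝ), HasDerivAt zh (mv A (zh t) + mv B (h (x t) + v t)) t)
    (T : E nx → E nz) (hT : ContDiff ℝ 1 T)
    (R : E nx → E nz)
    (hR : ∀ p, R p = fderiv ℝ T p (f p) - mv A (T p) - mv B (h p))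
    (Rbar : ℝ) (hRbar : Rbar = sSup ((fun p => ‖R p‖) '' X))
    (P Q : Matrix (Fin nz) (Fin nz) ℝ) (hP : P.PosDef) (hQ : Q.PosDef)
    (hLyap : P * A + Aᵀ * P = -Q)
    (εR εv : ℝ) (hεR : 0 < εR) (hεv : 0 < εv) (hsum : εR + εv < 1) :
    limsup (fun t => ‖zh t - T (x t)‖) atTop ≤
      Real.sqrt (1 / (((1 - εR - εv) * lamMin Q / lamMax P) * lamMin P)) *
        Real.sqrt ((opNorm (invSqrt Q * P)) ^ 2 / εR * Rbar ^ 2 +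
          (opNorm (invSqrt Q * P * B)) ^ 2 / εv * vbar ^ 2) :=
  stmt11_general f hf h hh A B X hXc x hx hxX vbar v hv zh hz T hT R hR Rbar hRbar P Q hP hQ hLyap
    εR εv hεR hεv hsum
end
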